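/- Let H be a finite-dimensional complex Hilbert space and g ∈ Λ²H a unit vector with canonical decomposition g = ∑_{i=1}^s ξ_i √2 φ_{2i-1}∧φ_{2i}. The vectors √3/√(1-|ξ_k|²) · g∧φ_{2k-1}, √3/√(1-|ξ_k|²) · g∧φ_{2k} (for 1 ≤ k ≤ s with |ξ_k| < 1) and √3 · g∧φ_l (for l > 2s) are pairwise orthogonal unit vectors in Λ³H. -/

import Mathlib

noncomputable section
open scoped BigOperators ComplexConjugate InnerProductSpace

/-- The 1-particle space. -/
abbrev HS (n : ℕ) := EuclideanSpace ℂ (Fin n)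
/-- Model for H^{⊗2}; Λ²H sits inside as the antisymmetric tensors. -/
abbrev Sq (n : ℕ) := EuclideanSpace ℂ (Fin 2 → Fin n)
/-- Model for H^{⊗3}; Λ³H sits inside as the antisymmetric tensors. -/
abbrev Cube (n : ℕ) := EuclideanSpace ℂ (Fin 3 → Fin n)

/-- 2-particle wedge with convention ⟨u₁∧u₂, v₁∧v₂⟩ = (1/2!)det(⟨uᵢ,vⱼ⟩). -/
def wedge2 (n : ℕ) (u v : HS n) : Sq n :=
  WithLp.toLp 2 (fun x => (2 : ℂ)⁻¹ * (u (x 0) * v (x 1) - u (x 1) * v (x 0)))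

/-- The 3-particle antisymmetrizer A³ on H^{⊗3}. -/
def alt3 (n : ℕ) : Cube n →ₗ[ℂ] Cube n where
  toFun T := WithLp.toLp 2 (fun x => (6 : ℂ)⁻¹ *
    ∑ σ : Equiv.Perm (Fin 3), ((Equiv.Perm.sign σ : ℤ) : ℂ) * T (x ∘ σ))
  map_add' T S := by
    ext x
    simp [PiLp.add_apply, mul_add, Finset.sum_add_distrib]
  map_smul' c T := by
    ext x
    simp [PiLp.smul_apply, Finset.mul_sum, smul_eq_mul]
    ring_nf
    congr 1
    ext σ
    ring

/-- 3-particle wedge with convention ⟨u₁∧u₂∧u₃, v₁∧v₂∧v₃⟩ = (1/3!)det(⟨uᵢ,vⱼ⟩). -/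
def wedge3 (n : ℕ) (u v w : HS n) : Cube n :=
  WithLp.toLp 2 (fun x => (6 : ℂ)⁻¹ * ∑ σ : Equiv.Perm (Fin 3),
    ((Equiv.Perm.sign σ : ℤ) : ℂ) * (u (x (σ 0)) * v (x (σ 1)) * w (x (σ 2))))

/-- Wedge of a 2-particle function with a 1-particle function: g ∧ φ = A³(g ⊗ φ). -/
def wedgeSV (n : ℕ) (g : Sq n) (v : HS n) : Cube n :=
  alt3 n (WithLp.toLp 2 (fun x => g ![x 0, x 1] * v (x 2)))

/-- P²_g ⊗ I¹ acting on H^{⊗3}. -/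
def pgI (n : ℕ) (g : Sq n) : Cube n →ₗ[ℂ] Cube n where
  toFun T := WithLp.toLp 2 (fun x => g ![x 0, x 1] *
    ∑ y : Fin 2 → Fin n, conj (g y) * T ![y 0, y 1, x 2])
  map_add' T S := by
    ext x
    simp [PiLp.add_apply, mul_add, Finset.sum_add_distrib]
  map_smul' c T := by
    ext x
    simp [PiLp.smul_apply, Finset.mul_sum, smul_eq_mul]
    ring_nf
    congr 1
    ext y
    ring

/-- The operator 3P²_g ∧ I¹ = 3A³(P²_g ⊗ I¹)A³ (as an operator on H^{⊗3}; it
vanishes on the orthogonal complement of Λ³H and restricts to Λ³H). -/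
def T3 (n : ℕ) (g : Sq n) : Cube n →ₗ[ℂ] Cube n :=
  (3 : ℂ) • (alt3 n ∘ₗ pgI n g ∘ₗ alt3 n)

lemma wedgeSV_wedge2 (n : ℕ) (u v w : HS n) :
    wedgeSV n (wedge2 n u v) w = wedge3 n u v w := by
  ext x
  simp only [wedgeSV, alt3, wedge2, wedge3, LinearMap.coe_mk, AddHom.coe_mk, PiLp.toLp_apply,
    Function.comp_apply, Matrix.cons_val_zero, Matrix.cons_val_one, Matrix.head_cons]
  congr 1
  have split : ∀ σ : Equiv.Perm (Fin 3),
      ((Equiv.Perm.sign σ : ℤ) : ℂ) *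
        ((2:ℂ)⁻¹ * (u (x (σ 0)) * v (x (σ 1)) - u (x (σ 1)) * v (x (σ 0))) * w (x (σ 2)))
      = (2:ℂ)⁻¹ * (((Equiv.Perm.sign σ : ℤ) : ℂ) * (u (x (σ 0)) * v (x (σ 1)) * w (x (σ 2))))
        - (2:ℂ)⁻¹ * (((Equiv.Perm.sign σ : ℤ) : ℂ) * (u (x (σ 1)) * v (x (σ 0)) * w (x (σ 2)))) := by
    intro σ; ring
  rw [Finset.sum_congr rfl (fun σ _ => split σ), Finset.sum_sub_distrib,
    ← Finset.mul_sum, ← Finset.mul_sum]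
  have reidx : ∑ σ : Equiv.Perm (Fin 3),
      ((Equiv.Perm.sign σ : ℤ) : ℂ) * (u (x (σ 1)) * v (x (σ 0)) * w (x (σ 2)))
      = - ∑ σ : Equiv.Perm (Fin 3),
        ((Equiv.Perm.sign σ : ℤ) : ℂ) * (u (x (σ 0)) * v (x (σ 1)) * w (x (σ 2))) := by
    rw [← Equiv.sum_comp (Equiv.mulRight (Equiv.swap (0:Fin 3) 1))
      (fun σ => ((Equiv.Perm.sign σ : ℤ) : ℂ) * (u (x (σ 0)) * v (x (σ 1)) * w (x (σ 2))))]
    rw [← Finset.sum_neg_distrib]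
    apply Finset.sum_congr rfl
    intro σ _
    have h0 : (Equiv.mulRight (Equiv.swap (0:Fin 3) 1) σ) 0 = σ 1 := by
      simp [Equiv.Perm.mul_apply]
    have h1 : (Equiv.mulRight (Equiv.swap (0:Fin 3) 1) σ) 1 = σ 0 := by
      simp [Equiv.Perm.mul_apply]
    have h2 : (Equiv.mulRight (Equiv.swap (0:Fin 3) 1) σ) 2 = σ 2 := by
      simp [Equiv.Perm.mul_apply, Equiv.swap_apply_of_ne_of_ne]
    have hs : ((Equiv.Perm.sign (Equiv.mulRight (Equiv.swap (0:Fin 3) 1) σ) : ℤ) : ℂ)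
        = -((Equiv.Perm.sign σ : ℤ) : ℂ) := by
      have : Equiv.mulRight (Equiv.swap (0:Fin 3) 1) σ = σ * Equiv.swap 0 1 := rfl
      rw [this, Equiv.Perm.sign_mul, Equiv.Perm.sign_swap (by decide)]
      push_cast; ring
    rw [h0, h1, h2, hs]
    ring
  rw [reidx]
  ring

def wedgeSVL (n : ℕ) (v : HS n) : Sq n →ₗ[ℂ] Cube n where
  toFun g := wedgeSV n g v
  map_add' g g' := by
    show (alt3 n) (WithLp.toLp 2 (fun x => (g + g') ![x 0, x 1] * v (x 2)))
      = (alt3 n) (WithLp.toLp 2 (fun x => g ![x 0, x 1] * v (x 2))) + (alt3 n) (WithLp.toLp 2 (fun x => g' ![x 0, x 1] * v (x 2)))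
    have h : (WithLp.toLp 2 (fun x : Fin 3 → Fin n => (g + g') ![x 0, x 1] * v (x 2)) : Cube n)
        = (WithLp.toLp 2 (fun x : Fin 3 → Fin n => g ![x 0, x 1] * v (x 2)))
          + (WithLp.toLp 2 (fun x : Fin 3 → Fin n => g' ![x 0, x 1] * v (x 2))) := by
      ext x
      simp [PiLp.add_apply, add_mul]
    rw [h, map_add]
  map_smul' c g := by
    show (alt3 n) (WithLp.toLp 2 (fun x => (c • g) ![x 0, x 1] * v (x 2)))
      = c • (alt3 n) (WithLp.toLp 2 (fun x => g ![x 0, x 1] * v (x 2)))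
    have h : (WithLp.toLp 2 (fun x : Fin 3 → Fin n => (c • g) ![x 0, x 1] * v (x 2)) : Cube n)
        = c • (WithLp.toLp 2 (fun x : Fin 3 → Fin n => g ![x 0, x 1] * v (x 2))) := by
      ext x
      simp [PiLp.smul_apply, smul_eq_mul]
      ring
    rw [h, map_smul]

lemma key (n : ℕ) (u v : Fin 3 → HS n) (σ τ : Equiv.Perm (Fin 3)) :
    ∑ x : Fin 3 → Fin n,
      (conj (u 0 (x (σ 0))) * conj (u 1 (x (σ 1))) * conj (u 2 (x (σ 2)))) *
      (v 0 (x (τ 0)) * v 1 (x (τ 1)) * v 2 (x (τ 2)))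
    = ∏ q : Fin 3, ⟪u q, v ((τ⁻¹ * σ) q)⟫_ℂ := by
  have h1 : ∀ x : Fin 3 → Fin n,
      (conj (u 0 (x (σ 0))) * conj (u 1 (x (σ 1))) * conj (u 2 (x (σ 2)))) *
      (v 0 (x (τ 0)) * v 1 (x (τ 1)) * v 2 (x (τ 2)))
      = ∏ p : Fin 3, (conj (u (σ⁻¹ p) (x p)) * v (τ⁻¹ p) (x p)) := by
    intro x
    rw [Finset.prod_mul_distrib]
    congr 1
    · rw [← Equiv.prod_comp σ (fun p => conj (u (σ⁻¹ p) (x p)))]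
      simp [Fin.prod_univ_three]
    · rw [← Equiv.prod_comp τ (fun p => v (τ⁻¹ p) (x p))]
      simp [Fin.prod_univ_three]
  rw [Finset.sum_congr rfl (fun x _ => h1 x)]
  rw [← Fintype.piFinset_univ,
    ← Finset.prod_univ_sum (fun _ => (Finset.univ : Finset (Fin n)))
      (fun p m => conj (u (σ⁻¹ p) m) * v (τ⁻¹ p) m)]
  rw [← Equiv.prod_comp σ (fun p => ∑ m, conj (u (σ⁻¹ p) m) * v (τ⁻¹ p) m)]
  apply Finset.prod_congr rfl
  intro q _
  rw [PiLp.inner_apply]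
  simp [RCLike.inner_apply, Equiv.Perm.mul_apply]
  exact Finset.sum_congr rfl (fun _ _ => mul_comm _ _)

lemma sign_sq (σ : Equiv.Perm (Fin 3)) :
    ((Equiv.Perm.sign σ : ℤ) : ℂ) * ((Equiv.Perm.sign σ : ℤ) : ℂ) = 1 := by
  rcases Int.units_eq_one_or (Equiv.Perm.sign σ) with h | h <;> rw [h] <;> norm_num

lemma inner_wedge3 (n : ℕ) (u v : Fin 3 → HS n) :
    ⟪wedge3 n (u 0) (u 1) (u 2), wedge3 n (v 0) (v 1) (v 2)⟫_ℂ
    = (6 : ℂ)⁻¹ * (Matrix.of fun q r => ⟪u q, v r⟫_ℂ).det := by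
  have expand : ∀ x : Fin 3 → Fin n,
      conj (wedge3 n (u 0) (u 1) (u 2) x) * wedge3 n (v 0) (v 1) (v 2) x
      = ∑ σ : Equiv.Perm (Fin 3), ∑ τ : Equiv.Perm (Fin 3),
          ((6:ℂ)⁻¹ * (6:ℂ)⁻¹ * (((Equiv.Perm.sign σ : ℤ) : ℂ) * ((Equiv.Perm.sign τ : ℤ) : ℂ))) *
          ((conj (u 0 (x (σ 0))) * conj (u 1 (x (σ 1))) * conj (u 2 (x (σ 2)))) *
           (v 0 (x (τ 0)) * v 1 (x (τ 1)) * v 2 (x (τ 2)))) := by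
    intro x
    simp only [wedge3, map_mul, map_sum, map_inv₀, map_ofNat, map_intCast]
    rw [Finset.mul_sum, Finset.mul_sum, Finset.sum_mul_sum]
    apply Finset.sum_congr rfl; intro σ _
    apply Finset.sum_congr rfl; intro τ _
    ring
  rw [PiLp.inner_apply]
  simp only [RCLike.inner_apply]
  rw [Finset.sum_congr rfl (fun x _ => (mul_comm _ _).trans (expand x))]
  rw [Finset.sum_comm]
  have step2 : ∀ σ : Equiv.Perm (Fin 3),
      (∑ x : Fin 3 → Fin n, ∑ τ : Equiv.Perm (Fin 3),
        ((6:ℂ)⁻¹ * (6:ℂ)⁻¹ * (((Equiv.Perm.sign σ : ℤ) : ℂ) * ((Equiv.Perm.sign τ : ℤ) : ℂ))) *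
        ((conj (u 0 (x (σ 0))) * conj (u 1 (x (σ 1))) * conj (u 2 (x (σ 2)))) *
         (v 0 (x (τ 0)) * v 1 (x (τ 1)) * v 2 (x (τ 2)))))
      = (6:ℂ)⁻¹ * (6:ℂ)⁻¹ *
          ∑ ρ : Equiv.Perm (Fin 3), ((Equiv.Perm.sign ρ : ℤ) : ℂ) *
            ∏ q : Fin 3, ⟪u q, v (ρ q)⟫_ℂ := by
    intro σ
    rw [Finset.sum_comm]
    have perτ : ∀ τ : Equiv.Perm (Fin 3),
        (∑ x : Fin 3 → Fin n,
          ((6:ℂ)⁻¹ * (6:ℂ)⁻¹ * (((Equiv.Perm.sign σ : ℤ) : ℂ) * ((Equiv.Perm.sign τ : ℤ) : ℂ))) *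
          ((conj (u 0 (x (σ 0))) * conj (u 1 (x (σ 1))) * conj (u 2 (x (σ 2)))) *
           (v 0 (x (τ 0)) * v 1 (x (τ 1)) * v 2 (x (τ 2)))))
        = ((6:ℂ)⁻¹ * (6:ℂ)⁻¹ * (((Equiv.Perm.sign σ : ℤ) : ℂ) * ((Equiv.Perm.sign τ : ℤ) : ℂ))) *
            ∏ q : Fin 3, ⟪u q, v ((τ⁻¹ * σ) q)⟫_ℂ := by
      intro τ
      rw [← Finset.mul_sum, key]
    rw [Finset.sum_congr rfl (fun τ _ => perτ τ)]
    -- reindex τ = σ * ρ⁻¹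
    have e : Equiv.Perm (Fin 3) ≃ Equiv.Perm (Fin 3) :=
      (Equiv.inv _).trans (Equiv.mulLeft σ)
    rw [← Equiv.sum_comp ((Equiv.inv (Equiv.Perm (Fin 3))).trans (Equiv.mulLeft σ))
      (fun τ => ((6:ℂ)⁻¹ * (6:ℂ)⁻¹ * (((Equiv.Perm.sign σ : ℤ) : ℂ) * ((Equiv.Perm.sign τ : ℤ) : ℂ))) *
            ∏ q : Fin 3, ⟪u q, v ((τ⁻¹ * σ) q)⟫_ℂ)]
    rw [Finset.mul_sum]
    apply Finset.sum_congr rfl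
    intro ρ _
    have h1 : ((Equiv.inv (Equiv.Perm (Fin 3))).trans (Equiv.mulLeft σ)) ρ = σ * ρ⁻¹ := rfl
    rw [h1]
    have h2 : (σ * ρ⁻¹)⁻¹ * σ = ρ := by group
    rw [h2]
    have h3 : ((Equiv.Perm.sign (σ * ρ⁻¹) : ℤ) : ℂ)
        = ((Equiv.Perm.sign σ : ℤ) : ℂ) * ((Equiv.Perm.sign ρ : ℤ) : ℂ) := by
      rw [map_mul, Equiv.Perm.sign_inv]
      push_cast
      ring
    rw [h3]
    linear_combination ((6:ℂ)⁻¹ * (6:ℂ)⁻¹ * ((Equiv.Perm.sign ρ : ℤ) : ℂ) *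
      ∏ q : Fin 3, ⟪u q, v (ρ q)⟫_ℂ) * sign_sq σ
  rw [Finset.sum_congr rfl (fun σ _ => step2 σ), Finset.sum_const, Finset.card_univ,
    Fintype.card_perm, Fintype.card_fin]
  have hdet : (Matrix.of fun q r => ⟪u q, v r⟫_ℂ).det
      = ∑ ρ : Equiv.Perm (Fin 3), ((Equiv.Perm.sign ρ : ℤ) : ℂ) *
          ∏ q : Fin 3, ⟪u q, v (ρ q)⟫_ℂ := by
    rw [← Matrix.det_transpose, Matrix.det_apply']
    rfl
  rw [hdet, nsmul_eq_mul]
  norm_num [Nat.factorial]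
  ring


lemma inner_wedge3_on {n : ℕ} {φ : Fin n → HS n} (hφ : Orthonormal ℂ φ)
    (a b c a' b' c' : Fin n) :
    ⟪wedge3 n (φ a) (φ b) (φ c), wedge3 n (φ a') (φ b') (φ c')⟫_ℂ
    = (6 : ℂ)⁻¹ * (Matrix.of fun q r =>
        (if (![a,b,c] q) = (![a',b',c'] r) then (1:ℂ) else 0)).det := by
  have h := inner_wedge3 n ![φ a, φ b, φ c] ![φ a', φ b', φ c']
  simp only [Matrix.cons_val_zero, Matrix.cons_val_one, Matrix.head_cons,
    Matrix.cons_val_two, Matrix.tail_cons] at h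
  rw [h]
  congr 1
  congr 1
  funext q r
  simp only [Matrix.of_apply]
  fin_cases q <;> fin_cases r <;>
    simp [orthonormal_iff_ite.mp hφ] <;> congr

set_option maxHeartbeats 2000000 in
lemma master {n s : ℕ} {φ : Fin n → HS n} (hφ : Orthonormal ℂ φ)
    (i i' : Fin s) (a b a' b' j j' : Fin n)
    (ha : (a:ℕ) = 2*(i:ℕ)) (hb : (b:ℕ) = 2*(i:ℕ)+1)
    (ha' : (a':ℕ) = 2*(i':ℕ)) (hb' : (b':ℕ) = 2*(i':ℕ)+1) :
    ⟪wedge3 n (φ a) (φ b) (φ j), wedge3 n (φ a') (φ b') (φ j')⟫_ℂ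
    = if i = i' ∧ j = j' ∧ (j:ℕ) ≠ 2*(i:ℕ) ∧ (j:ℕ) ≠ 2*(i:ℕ)+1 then (6:ℂ)⁻¹ else 0 := by
  rw [inner_wedge3_on hφ, Matrix.det_fin_three]
  simp only [Matrix.of_apply, Matrix.cons_val_zero, Matrix.cons_val_one, Matrix.head_cons,
    Matrix.cons_val_two, Matrix.tail_cons, Fin.ext_iff]
  simp only [← Fin.ext_iff]
  split_ifs <;> simp only [Fin.ext_iff] at * <;> first | (exfalso; omega) | norm_num

lemma gw_decomp (n s : ℕ) (hsn : 2 * s ≤ n) (φ : Fin n → HS n) (ξ : Fin s → ℂ) (v : HS n) :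
    wedgeSV n (∑ i : Fin s, ξ i • ((Real.sqrt 2 : ℂ) •
      wedge2 n (φ ⟨2 * (i : ℕ), Nat.lt_of_lt_of_le (by have := i.isLt; omega : 2 * (i : ℕ) < 2 * s) hsn⟩)
        (φ ⟨2 * (i : ℕ) + 1, Nat.lt_of_lt_of_le (by have := i.isLt; omega : 2 * (i : ℕ) + 1 < 2 * s) hsn⟩))) v
    = ∑ i : Fin s, (ξ i * (Real.sqrt 2 : ℂ)) •
        wedge3 n (φ ⟨2 * (i : ℕ), Nat.lt_of_lt_of_le (by have := i.isLt; omega : 2 * (i : ℕ) < 2 * s) hsn⟩)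
          (φ ⟨2 * (i : ℕ) + 1, Nat.lt_of_lt_of_le (by have := i.isLt; omega : 2 * (i : ℕ) + 1 < 2 * s) hsn⟩) v := by
  have h0 : ∀ g : Sq n, wedgeSV n g v = wedgeSVL n v g := fun _ => rfl
  rw [h0, map_sum]
  apply Finset.sum_congr rfl
  intro i _
  rw [map_smul, map_smul, ← h0, wedgeSV_wedge2, smul_smul]

lemma inner_gw (n s : ℕ) (hsn : 2 * s ≤ n) (φ : Fin n → HS n) (hφ : Orthonormal ℂ φ)
    (ξ : Fin s → ℂ) (j j' : Fin n) :
    ⟪wedgeSV n (∑ i : Fin s, ξ i • ((Real.sqrt 2 : ℂ) •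
      wedge2 n (φ ⟨2 * (i : ℕ), Nat.lt_of_lt_of_le (by have := i.isLt; omega : 2 * (i : ℕ) < 2 * s) hsn⟩)
        (φ ⟨2 * (i : ℕ) + 1, Nat.lt_of_lt_of_le (by have := i.isLt; omega : 2 * (i : ℕ) + 1 < 2 * s) hsn⟩))) (φ j),
     wedgeSV n (∑ i : Fin s, ξ i • ((Real.sqrt 2 : ℂ) •
      wedge2 n (φ ⟨2 * (i : ℕ), Nat.lt_of_lt_of_le (by have := i.isLt; omega : 2 * (i : ℕ) < 2 * s) hsn⟩)
        (φ ⟨2 * (i : ℕ) + 1, Nat.lt_of_lt_of_le (by have := i.isLt; omega : 2 * (i : ℕ) + 1 < 2 * s) hsn⟩))) (φ j')⟫_ℂ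
    = if j = j' then
        ∑ i : Fin s, (if (j:ℕ) ≠ 2*(i:ℕ) ∧ (j:ℕ) ≠ 2*(i:ℕ)+1
          then ((‖ξ i‖ : ℂ))^2 * (3:ℂ)⁻¹ else 0)
      else 0 := by
  rw [gw_decomp n s hsn, gw_decomp n s hsn, sum_inner]
  have step : ∀ i : Fin s,
      ⟪(ξ i * (Real.sqrt 2 : ℂ)) •
          wedge3 n (φ ⟨2 * (i : ℕ), Nat.lt_of_lt_of_le (by have := i.isLt; omega : 2 * (i : ℕ) < 2 * s) hsn⟩)
            (φ ⟨2 * (i : ℕ) + 1, Nat.lt_of_lt_of_le (by have := i.isLt; omega : 2 * (i : ℕ) + 1 < 2 * s) hsn⟩) (φ j),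
        ∑ i' : Fin s, (ξ i' * (Real.sqrt 2 : ℂ)) •
          wedge3 n (φ ⟨2 * (i' : ℕ), Nat.lt_of_lt_of_le (by have := i'.isLt; omega : 2 * (i' : ℕ) < 2 * s) hsn⟩)
            (φ ⟨2 * (i' : ℕ) + 1, Nat.lt_of_lt_of_le (by have := i'.isLt; omega : 2 * (i' : ℕ) + 1 < 2 * s) hsn⟩) (φ j')⟫_ℂ
      = if j = j' then
          (if (j:ℕ) ≠ 2*(i:ℕ) ∧ (j:ℕ) ≠ 2*(i:ℕ)+1
            then ((‖ξ i‖ : ℂ))^2 * (3:ℂ)⁻¹ else 0)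
        else 0 := by
    intro i
    rw [inner_smul_left, inner_sum]
    have inner_i' : ∀ i' : Fin s,
        ⟪wedge3 n (φ ⟨2 * (i : ℕ), Nat.lt_of_lt_of_le (by have := i.isLt; omega : 2 * (i : ℕ) < 2 * s) hsn⟩)
            (φ ⟨2 * (i : ℕ) + 1, Nat.lt_of_lt_of_le (by have := i.isLt; omega : 2 * (i : ℕ) + 1 < 2 * s) hsn⟩) (φ j),
          (ξ i' * (Real.sqrt 2 : ℂ)) •
            wedge3 n (φ ⟨2 * (i' : ℕ), Nat.lt_of_lt_of_le (by have := i'.isLt; omega : 2 * (i' : ℕ) < 2 * s) hsn⟩)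
              (φ ⟨2 * (i' : ℕ) + 1, Nat.lt_of_lt_of_le (by have := i'.isLt; omega : 2 * (i' : ℕ) + 1 < 2 * s) hsn⟩) (φ j')⟫_ℂ
        = (ξ i' * (Real.sqrt 2 : ℂ)) *
            (if i = i' ∧ j = j' ∧ (j:ℕ) ≠ 2*(i:ℕ) ∧ (j:ℕ) ≠ 2*(i:ℕ)+1
              then (6:ℂ)⁻¹ else 0) := by
      intro i'
      rw [inner_smul_right, master hφ i i' _ _ _ _ j j' rfl rfl rfl rfl]
    rw [Finset.sum_congr rfl (fun i' _ => inner_i' i')]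
    rw [Finset.sum_eq_single i ?h1 ?h2]
    · by_cases hQ : j = j' ∧ (j:ℕ) ≠ 2*(i:ℕ) ∧ (j:ℕ) ≠ 2*(i:ℕ)+1
      · rw [if_pos ⟨rfl, hQ⟩, if_pos hQ.1, if_pos hQ.2]
        rw [map_mul, Complex.conj_ofReal]
        have h2 : ((Real.sqrt 2 : ℝ) : ℂ) * ((Real.sqrt 2 : ℝ) : ℂ) = 2 := by
          rw [← Complex.ofReal_mul, Real.mul_self_sqrt (by norm_num)]
          norm_num
        have h3 : (starRingEnd ℂ) (ξ i) * ξ i = ((‖ξ i‖ : ℂ))^2 := RCLike.conj_mul (ξ i)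
        calc (starRingEnd ℂ) (ξ i) * ((Real.sqrt 2 : ℝ) : ℂ) *
              (ξ i * ((Real.sqrt 2 : ℝ) : ℂ) * (6:ℂ)⁻¹)
            = ((starRingEnd ℂ) (ξ i) * ξ i) *
              ((((Real.sqrt 2 : ℝ) : ℂ) * ((Real.sqrt 2 : ℝ) : ℂ)) * (6:ℂ)⁻¹) := by ring
          _ = ((‖ξ i‖ : ℂ))^2 * (2 * (6:ℂ)⁻¹) := by rw [h2, h3]
          _ = _ := by norm_num
      · have : ¬(i = i ∧ j = j' ∧ (j:ℕ) ≠ 2*(i:ℕ) ∧ (j:ℕ) ≠ 2*(i:ℕ)+1) := by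
          simp only [true_and]; exact hQ
        rw [if_neg this]
        by_cases hjj : j = j'
        · have : ¬((j:ℕ) ≠ 2*(i:ℕ) ∧ (j:ℕ) ≠ 2*(i:ℕ)+1) := fun h => hQ ⟨hjj, h⟩
          rw [if_pos hjj, if_neg this]
          ring
        · rw [if_neg hjj]
          ring
    · intro i' _ hne
      rw [if_neg (by simp [Ne.symm hne])]
      ring
    · intro h
      exact absurd (Finset.mem_univ i) h
  rw [Finset.sum_congr rfl (fun i _ => step i)]
  by_cases hjj : j = j'
  · simp [hjj]
  · simp [hjj]

set_option maxHeartbeats 1000000 in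
/-- The normalized vectors √3/√(1-|ξ_k|²)·g∧φ_{2k-1}, √3/√(1-|ξ_k|²)·g∧φ_{2k}
(for k with |ξ_k| < 1) and √3·g∧φ_l (l > 2s) are pairwise orthogonal unit vectors. -/
theorem stmt8 (n s : ℕ) (hsn : 2 * s ≤ n) (φ : Fin n → HS n)
    (hφ : Orthonormal ℂ φ) (ξ : Fin s → ℂ) (hξ : ∑ i, ‖ξ i‖ ^ 2 = 1) :
    let g : Sq n := ∑ i : Fin s, ξ i • ((Real.sqrt 2 : ℂ) •
      wedge2 n (φ ⟨2 * (i : ℕ), by have := i.isLt; omega⟩)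
        (φ ⟨2 * (i : ℕ) + 1, by have := i.isLt; omega⟩));
    let ξ' : ℕ → ℂ := fun m => if h : m < s then ξ ⟨m, h⟩ else 0;
    let e : Fin n → Cube n := fun j =>
      if (j : ℕ) < 2 * s then
        ((Real.sqrt 3 / Real.sqrt (1 - ‖ξ' ((j : ℕ) / 2)‖ ^ 2) : ℝ) : ℂ) •
          wedgeSV n g (φ j)
      else ((Real.sqrt 3 : ℝ) : ℂ) • wedgeSV n g (φ j);
    (∀ j : Fin n, ((j : ℕ) < 2 * s → ‖ξ' ((j : ℕ) / 2)‖ < 1) → ‖e j‖ = 1) ∧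
    (∀ j j' : Fin n, j ≠ j' →
      ((j : ℕ) < 2 * s → ‖ξ' ((j : ℕ) / 2)‖ < 1) →
      ((j' : ℕ) < 2 * s → ‖ξ' ((j' : ℕ) / 2)‖ < 1) →
      ⟪e j, e j'⟫_ℂ = 0) := by
  intro g ξ' e
  have hg : g = ∑ i : Fin s, ξ i • ((Real.sqrt 2 : ℂ) •
      wedge2 n (φ ⟨2 * (i : ℕ), by have := i.isLt; omega⟩)
        (φ ⟨2 * (i : ℕ) + 1, by have := i.isLt; omega⟩)) := rfl
  have hξ'def : ξ' = fun m => if h : m < s then ξ ⟨m, h⟩ else 0 := rfl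
  have he : e = fun j : Fin n =>
      if (j : ℕ) < 2 * s then
        ((Real.sqrt 3 / Real.sqrt (1 - ‖ξ' ((j : ℕ) / 2)‖ ^ 2) : ℝ) : ℂ) •
          wedgeSV n g (φ j)
      else ((Real.sqrt 3 : ℝ) : ℂ) • wedgeSV n g (φ j) := rfl
  have hsum1 : ∑ i : Fin s, ((‖ξ i‖ : ℂ))^2 * (3:ℂ)⁻¹ = (3:ℂ)⁻¹ := by
    rw [← Finset.sum_mul]
    have hc : (∑ i : Fin s, ((‖ξ i‖ : ℂ))^2) = ((∑ i, ‖ξ i‖^2 : ℝ) : ℂ) := by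
      push_cast; rfl
    rw [hc, hξ, Complex.ofReal_one, one_mul]
  constructor
  · -- norms
    intro j hj
    by_cases hjs : (j:ℕ) < 2*s
    · -- paired block
      have hk : (j:ℕ)/2 < s := by omega
      have hξ'k : ξ' ((j:ℕ)/2) = ξ ⟨(j:ℕ)/2, hk⟩ := by
        rw [hξ'def]; simp [hk]
      have hlt : ‖ξ ⟨(j:ℕ)/2, hk⟩‖ < 1 := by rw [← hξ'k]; exact hj hjs
      have hw : ⟪wedgeSV n g (φ j), wedgeSV n g (φ j)⟫_ℂ
          = (((1 - ‖ξ ⟨(j:ℕ)/2, hk⟩‖^2) * 3⁻¹ : ℝ) : ℂ) := by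
        rw [hg, inner_gw n s hsn φ hφ ξ j j, if_pos rfl]
        have key : ∀ i : Fin s,
            (if (j:ℕ) ≠ 2*(i:ℕ) ∧ (j:ℕ) ≠ 2*(i:ℕ)+1 then ((‖ξ i‖ : ℂ))^2 * (3:ℂ)⁻¹ else 0)
            = ((‖ξ i‖ : ℂ))^2 * (3:ℂ)⁻¹
              - (if i = ⟨(j:ℕ)/2, hk⟩ then ((‖ξ i‖ : ℂ))^2 * (3:ℂ)⁻¹ else 0) := by
          intro i
          by_cases hik : i = ⟨(j:ℕ)/2, hk⟩
          · have hiv : (i:ℕ) = (j:ℕ)/2 := by rw [hik]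
            rw [if_pos hik, if_neg (by omega)]
            ring
          · have hiv : (i:ℕ) ≠ (j:ℕ)/2 := by
              intro h; exact hik (Fin.ext h)
            rw [if_pos (by omega), if_neg hik]
            ring
        rw [Finset.sum_congr rfl (fun i _ => key i), Finset.sum_sub_distrib,
          Finset.sum_ite_eq' Finset.univ, if_pos (Finset.mem_univ _), hsum1]
        push_cast
        ring
      have hnw : ‖wedgeSV n g (φ j)‖^2 = (1 - ‖ξ ⟨(j:ℕ)/2, hk⟩‖^2) * 3⁻¹ := by
        have h := inner_self_eq_norm_sq (𝕜 := ℂ) (wedgeSV n g (φ j))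
        rw [hw] at h
        rw [← h]
        simp [RCLike.re_to_complex, ← Complex.ofReal_pow]
      rw [he]
      simp only [if_pos hjs]
      rw [norm_smul]
      have hc0 : 0 ≤ Real.sqrt 3 / Real.sqrt (1 - ‖ξ' ((j:ℕ)/2)‖^2) :=
        div_nonneg (Real.sqrt_nonneg _) (Real.sqrt_nonneg _)
      rw [Complex.norm_real, Real.norm_eq_abs, abs_of_nonneg hc0]
      have ht : ‖ξ ⟨(j:ℕ)/2, hk⟩‖^2 < 1 := by
        nlinarith [norm_nonneg (ξ ⟨(j:ℕ)/2, hk⟩)]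
      have hne0 : (1:ℝ) - ‖ξ ⟨(j:ℕ)/2, hk⟩‖^2 ≠ 0 := by nlinarith
      have hcsq : (Real.sqrt 3 / Real.sqrt (1 - ‖ξ' ((j:ℕ)/2)‖^2))^2
          = 3 / (1 - ‖ξ ⟨(j:ℕ)/2, hk⟩‖^2) := by
        rw [hξ'k, div_pow, Real.sq_sqrt (by norm_num : (0:ℝ) ≤ 3),
          Real.sq_sqrt (by nlinarith)]
      have hsq : (Real.sqrt 3 / Real.sqrt (1 - ‖ξ' ((j:ℕ)/2)‖^2) * ‖wedgeSV n g (φ j)‖)^2 = 1 := by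
        rw [mul_pow, hcsq, hnw, div_mul_eq_mul_div, div_eq_one_iff_eq hne0]
        ring
      nlinarith [mul_nonneg hc0 (norm_nonneg (wedgeSV n g (φ j)))]
    · -- tail block
      have hw : ⟪wedgeSV n g (φ j), wedgeSV n g (φ j)⟫_ℂ = (((3:ℝ)⁻¹ : ℝ) : ℂ) := by
        rw [hg, inner_gw n s hsn φ hφ ξ j j, if_pos rfl]
        have key : ∀ i : Fin s,
            (if (j:ℕ) ≠ 2*(i:ℕ) ∧ (j:ℕ) ≠ 2*(i:ℕ)+1 then ((‖ξ i‖ : ℂ))^2 * (3:ℂ)⁻¹ else 0)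
            = ((‖ξ i‖ : ℂ))^2 * (3:ℂ)⁻¹ := by
          intro i
          have := i.isLt
          rw [if_pos (by omega)]
        rw [Finset.sum_congr rfl (fun i _ => key i), hsum1]
        push_cast
        ring
      have hnw : ‖wedgeSV n g (φ j)‖^2 = (3:ℝ)⁻¹ := by
        have h := inner_self_eq_norm_sq (𝕜 := ℂ) (wedgeSV n g (φ j))
        rw [hw] at h
        rw [← h]
        simp [RCLike.re_to_complex, ← Complex.ofReal_pow]
      rw [he]
      simp only [if_neg hjs]
      rw [norm_smul]
      have hc0 : 0 ≤ Real.sqrt 3 := Real.sqrt_nonneg _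
      rw [Complex.norm_real, Real.norm_eq_abs, abs_of_nonneg hc0]
      have hsq : (Real.sqrt 3 * ‖wedgeSV n g (φ j)‖)^2 = 1 := by
        rw [mul_pow, Real.sq_sqrt (by norm_num : (0:ℝ) ≤ 3), hnw]
        norm_num
      nlinarith [mul_nonneg hc0 (norm_nonneg (wedgeSV n g (φ j)))]
  · -- orthogonality
    intro j j' hne _ _
    have hz : ⟪wedgeSV n g (φ j), wedgeSV n g (φ j')⟫_ℂ = 0 := by
      rw [hg, inner_gw n s hsn φ hφ ξ j j', if_neg hne]
    rw [he]
    simp only []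
    split_ifs <;> rw [inner_smul_left, inner_smul_right, hz] <;> ring

end
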